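/- arXiv:1804.07382 — 3 statements merged into one kernel-verified Lean document; each statement's English description precedes it below -/
import Mathlib

section
/- Let Ā ∈ ℝ^{n×n} and C̄ ∈ ℝ^{p×n}. If P ∈ ℝ^{n×n} is positive semidefinite and satisfies the strict Lyapunov inequality ĀᵀP + PĀ + C̄ᵀC̄ < 0, then P is positive definite and Ā is Hurwitz. -/
open Matrix Filter

/-- Matrix exponential over the reals. -/
noncomputable def mexp {ι : Type*} [Fintype ι] [DecidableEq ι]
    (A : Matrix ι ι ℝ) : Matrix ι ι ℝ :=
  NormedSpace.exp A

/-- A real square matrix is Hurwitz if every complex eigenvalue has negative real part. -/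
def IsHurwitz {ι : Type*} [Fintype ι] [DecidableEq ι] (A : Matrix ι ι ℝ) : Prop :=
  ∀ μ ∈ spectrum ℂ (A.map (algebraMap ℝ ℂ)), μ.re < 0

/-- `M < 0` : `M` is symmetric negative definite. -/
def NegDef {ι : Type*} [Fintype ι] (M : Matrix ι ι ℝ) : Prop := (-M).PosDef

/-!
If `xᵀPx = 0` then `Px = 0` because `P ≥ 0`, so the Lyapunov form at `x` reduces to `|Cx|² ≥ 0`,
contradicting strictness; hence `P > 0`. For a complex eigenpair `Av = μv`, the form
`v*(AᴴP + PA)v` equals `2 Re μ · v*Pv`, so strictness gives `2 Re μ · v*Pv < -|Cv|² ≤ 0`, and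
`v*Pv ≥ 0` forces `Re μ < 0`.
-/

open scoped ComplexOrder

namespace Matrix

variable {ι : Type*} [Fintype ι]

lemma exists_mulVec_eq_smul_of_mem_spectrum {K : Type*} [Field K] [DecidableEq ι]
    {A : Matrix ι ι K} {μ : K} (hμ : μ ∈ spectrum K A) :
    ∃ v : ι → K, v ≠ 0 ∧ A *ᵥ v = μ • v := by
  rw [← spectrum_toLin', ← Module.End.hasEigenvalue_iff_mem_spectrum] at hμ
  obtain ⟨v, hv⟩ := hμ.exists_hasEigenvector
  exact ⟨v, hv.2, hv.apply_eq_smul⟩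

lemma dotProduct_mulVec_conjTranspose_mul_add_mul_of_mulVec_eq_smul {R : Type*} [CommRing R]
    [StarRing R] (A P : Matrix ι ι R) {μ : R} {v : ι → R} (hv : A *ᵥ v = μ • v) :
    star v ⬝ᵥ ((Aᴴ * P + P * A) *ᵥ v) = (star μ + μ) * (star v ⬝ᵥ (P *ᵥ v)) := by
  rw [add_mulVec, dotProduct_add, ← mulVec_mulVec, ← mulVec_mulVec, dotProduct_mulVec,
    ← star_mulVec, hv, star_smul, smul_dotProduct, mulVec_smul, dotProduct_smul, smul_eq_mul,
    smul_eq_mul, add_mul]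

section Lyapunov

variable {𝕜 : Type*} [RCLike 𝕜] {A P Q : Matrix ι ι 𝕜}

theorem PosSemidef.posDef_of_lyapunov (hP : P.PosSemidef) (hQ : Q.PosSemidef)
    (h : (-(Aᴴ * P + P * A + Q)).PosDef) : P.PosDef := by
  refine .of_dotProduct_mulVec_pos hP.isHermitian fun x hx => ?_
  refine lt_of_le_of_ne (hP.dotProduct_mulVec_nonneg x) fun hx0 => ?_
  have hPx : P *ᵥ x = 0 := (hP.dotProduct_mulVec_zero_iff x).mp hx0.symm
  have hxP : vecMul (star x) P = 0 := by
    rw [← hP.isHermitian.eq, ← star_mulVec, hPx, star_zero]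
  have hQx := h.dotProduct_mulVec_pos hx
  rw [neg_mulVec, dotProduct_neg, add_mulVec, add_mulVec, dotProduct_add, dotProduct_add,
    ← mulVec_mulVec, ← mulVec_mulVec, hPx, mulVec_zero, dotProduct_mulVec (star x) P, hxP,
    zero_dotProduct, dotProduct_zero, zero_add, zero_add, neg_pos] at hQx
  exact (hQ.dotProduct_mulVec_nonneg x).not_gt hQx

theorem re_lt_zero_of_lyapunov_of_mulVec_eq_smul (hP : P.PosSemidef) (hQ : Q.PosSemidef)
    (h : (-(Aᴴ * P + P * A + Q)).PosDef) {μ : 𝕜} {v : ι → 𝕜} (hv0 : v ≠ 0)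
    (hv : A *ᵥ v = μ • v) : RCLike.re μ < 0 := by
  have hpos := h.re_dotProduct_pos hv0
  rw [neg_mulVec, dotProduct_neg, add_mulVec, dotProduct_add,
    dotProduct_mulVec_conjTranspose_mul_add_mul_of_mulVec_eq_smul A P hv, add_comm (star μ),
    RCLike.star_def, RCLike.add_conj, map_neg, map_add, ← RCLike.ofReal_ofNat,
    ← RCLike.ofReal_mul, RCLike.re_ofReal_mul] at hpos
  have hr := hP.re_dotProduct_nonneg v
  have hq := hQ.re_dotProduct_nonneg v
  by_contra! hμ
  linarith [mul_nonneg (mul_nonneg zero_le_two hμ) hr]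

end Lyapunov

section Complexification

open scoped MatrixOrder

variable {𝕜 : Type*} [RCLike 𝕜]

lemma conjTranspose_map_algebraMap {m n : Type*} (M : Matrix m n ℝ) :
    (M.map (algebraMap ℝ 𝕜))ᴴ = Mᵀ.map (algebraMap ℝ 𝕜) := by
  rw [← conjTranspose_eq_transpose_of_trivial, conjTranspose_map]
  intro a
  simp

theorem PosSemidef.map_algebraMap [DecidableEq ι] {M : Matrix ι ι ℝ} (hM : M.PosSemidef) :
    (M.map (algebraMap ℝ 𝕜)).PosSemidef := by
  obtain ⟨B, rfl⟩ := CStarAlgebra.nonneg_iff_eq_star_mul_self.mp hM.nonneg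
  rw [star_eq_conjTranspose, conjTranspose_eq_transpose_of_trivial, Matrix.map_mul,
    ← conjTranspose_map_algebraMap]
  exact posSemidef_conjTranspose_mul_self _

theorem PosDef.map_algebraMap [DecidableEq ι] {M : Matrix ι ι ℝ} (hM : M.PosDef) :
    (M.map (algebraMap ℝ 𝕜)).PosDef := by
  rw [hM.posSemidef.map_algebraMap.posDef_iff_det_ne_zero, ← RingHom.mapMatrix_apply,
    ← RingHom.map_det]
  exact (map_ne_zero _).mpr hM.det_pos.ne'

end Complexification

end Matrix

theorem stmt3 {n p : ℕ}
    (A : Matrix (Fin n) (Fin n) ℝ) (C : Matrix (Fin p) (Fin n) ℝ)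
    (P : Matrix (Fin n) (Fin n) ℝ) (hP : P.PosSemidef)
    (hLyap : NegDef (Aᵀ * P + P * A + Cᵀ * C)) :
    P.PosDef ∧ IsHurwitz A := by
  have hQ : (Cᵀ * C).PosSemidef := posSemidef_conjTranspose_mul_self C
  have hLyapH : (-(Aᴴ * P + P * A + Cᵀ * C)).PosDef := by
    rwa [conjTranspose_eq_transpose_of_trivial]
  refine ⟨hP.posDef_of_lyapunov hQ hLyapH, fun μ hμ => ?_⟩
  obtain ⟨v, hv0, hv⟩ := exists_mulVec_eq_smul_of_mem_spectrum hμ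
  refine re_lt_zero_of_lyapunov_of_mulVec_eq_smul hP.map_algebraMap hQ.map_algebraMap ?_ hv0 hv
  have hLyapℂ := PosDef.map_algebraMap (𝕜 := ℂ) hLyap
  rw [← RingHom.mapMatrix_apply, map_neg, map_add, map_add, map_mul, map_mul] at hLyapℂ
  simpa only [RingHom.mapMatrix_apply, conjTranspose_map_algebraMap] using hLyapℂ
end

section
/- Let A ∈ ℝ^{n×n}, B ∈ ℝ^{n×m}, C ∈ ℝ^{p×n}, D ∈ ℝ^{p×m}, E ∈ ℝ^{n×q} with (A,B) stabilizable, DᵀC = 0 and DᵀD = I_m, and let γ > 0. Suppose there exists a positive semidefinite matrix P ∈ ℝ^{n×n} satisfying AᵀP + PA − PBBᵀP + CᵀC < 0 and tr(EᵀPE) < γ. Set K = −BᵀP. Then A + BK is Hurwitz and the closed-loop H₂ cost J(K) = ∫₀^∞ tr(TK(t)ᵀ TK(t)) dt, where TK(t) = (C + DK)e^{(A+BK)t}E, satisfies J(K) < γ. -/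
/-!
With `K = -BᵀP` and `A_K = A + BK`, the conditions `DᵀC = 0`, `DᵀD = I` turn the Riccati
expression into the closed-loop Lyapunov expression:
`A_KᵀP + PA_K + (C + DK)ᵀ(C + DK) = AᵀP + PA - PBBᵀP + CᵀC < 0`.
Hence `A_KᵀP + PA_K < 0`. This forces the semidefinite `P` to be definite (on `ker P` the
quadratic form of `A_KᵀP + PA_K` vanishes), and for an eigenvector `v` of `A_K` with eigenvalue
`μ` it gives `2 Re μ · v*Pv = v*(A_KᵀP + PA_K)v < 0`, so `Re μ < 0`.

For the cost, `V(t) = tr(Eᵀ e^{A_Kᵀt} P e^{A_K t} E) ≥ 0` satisfies `V' ≤ -tr(T_K(t)ᵀT_K(t))`,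
so every partial integral of the cost is at most `V(0) = tr(EᵀPE) < γ`.
-/

open Matrix Filter

open Set MeasureTheory
open scoped ComplexOrder

namespace Matrix

variable {ι : Type*} [Fintype ι]

open scoped MatrixOrder in
theorem PosDef.map_algebraMap_complex [DecidableEq ι] {M : Matrix ι ι ℝ} (hM : M.PosDef) :
    (M.map (algebraMap ℝ ℂ)).PosDef := by
  -- `M = Bᵀ B`, so its complexification is `Bᴴ B`, which is semidefinite with `det ≠ 0`.
  obtain ⟨B, rfl⟩ := CStarAlgebra.nonneg_iff_eq_star_mul_self.mp hM.posSemidef.nonneg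
  have hB : (star B * B).map (algebraMap ℝ ℂ)
      = (B.map (algebraMap ℝ ℂ))ᴴ * B.map (algebraMap ℝ ℂ) := by
    rw [Matrix.map_mul, star_eq_conjTranspose, conjTranspose_map _ (fun x => by simp)]
  rw [hB, (posSemidef_conjTranspose_mul_self _).posDef_iff_det_ne_zero, ← hB,
    ← RingHom.mapMatrix_apply, ← RingHom.map_det]
  simpa using hM.det_pos.ne'

theorem PosSemidef.posDef_of_lyapunov_s6 {𝕜 : Type*} [RCLike 𝕜] {A P : Matrix ι ι 𝕜}
    (hP : P.PosSemidef) (hL : (-(Aᴴ * P + P * A)).PosDef) : P.PosDef := by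
  refine .of_dotProduct_mulVec_pos hP.isHermitian fun x hx => ?_
  refine (hP.dotProduct_mulVec_nonneg x).lt_of_ne fun hxPx => ?_
  have hPx : P *ᵥ x = 0 := (hP.dotProduct_mulVec_zero_iff x).1 hxPx.symm
  have hxP : star x ᵥ* P = 0 := by
    simpa [hP.isHermitian.eq, hPx] using (star_mulVec P x).symm
  have := hL.dotProduct_mulVec_pos hx
  simp [neg_mulVec, add_mulVec, ← mulVec_mulVec, hPx, dotProduct_mulVec, hxP] at this

theorem re_lt_zero_of_mem_spectrum_of_lyapunov [DecidableEq ι] {A P : Matrix ι ι ℂ}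
    (hP : P.PosDef) (hL : (-(Aᴴ * P + P * A)).PosDef) {μ : ℂ} (hμ : μ ∈ spectrum ℂ A) :
    μ.re < 0 := by
  rw [← spectrum_toLin', ← Module.End.hasEigenvalue_iff_mem_spectrum] at hμ
  obtain ⟨v, hv⟩ := hμ.exists_hasEigenvector
  have hAv : A *ᵥ v = μ • v := by simpa using hv.apply_eq_smul
  have hform : star v ⬝ᵥ (Aᴴ * P + P * A) *ᵥ v = (star μ + μ) * (star v ⬝ᵥ P *ᵥ v) := by
    rw [add_mulVec, ← mulVec_mulVec, ← mulVec_mulVec, dotProduct_add, dotProduct_mulVec,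
      ← star_mulVec, hAv, mulVec_smul, star_smul]
    simp [add_mul]
  have hPv := Complex.pos_iff.mp (hP.dotProduct_mulVec_pos hv.2)
  have hLv := Complex.pos_iff.mp (hL.dotProduct_mulVec_pos hv.2)
  rw [neg_mulVec, dotProduct_neg, hform] at hLv
  simp only [Complex.neg_re, Complex.mul_re, Complex.add_re, Complex.add_im, Complex.star_def,
    Complex.conj_re, Complex.conj_im, neg_add_cancel, zero_mul, sub_zero] at hLv
  nlinarith [hLv.1, hPv.1]

end Matrix

theorem isHurwitz_of_lyapunov {ι : Type*} [Fintype ι] [DecidableEq ι] {A P : Matrix ι ι ℝ}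
    (hP : P.PosSemidef) (hL : NegDef (Aᵀ * P + P * A)) : IsHurwitz A := by
  rw [NegDef, ← conjTranspose_eq_transpose_of_trivial] at hL
  have hLℂ := PosDef.map_algebraMap_complex hL
  rw [Matrix.map_neg _ (map_neg _), Matrix.map_add _ (map_add _), Matrix.map_mul, Matrix.map_mul,
    conjTranspose_map _ (fun x => by simp)] at hLℂ
  exact fun μ hμ => re_lt_zero_of_mem_spectrum_of_lyapunov
    (hP.posDef_of_lyapunov_s6 hL).map_algebraMap_complex hLℂ hμ

theorem setIntegral_Ioi_le_of_intervalIntegral_le {f : ℝ → ℝ} {a c : ℝ}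
    (hf : ∀ b, IntegrableOn f (Ioc a b)) (hf0 : ∀ t, 0 ≤ f t)
    (h : ∀ b ≥ a, ∫ t in a..b, f t ≤ c) : ∫ t in Ioi a, f t ≤ c := by
  have hnorm : ∀ b, ∫ t in a..b, ‖f t‖ = ∫ t in a..b, f t := fun b =>
    intervalIntegral.integral_congr fun t _ => Real.norm_of_nonneg (hf0 t)
  have hint : IntegrableOn f (Ioi a) :=
    integrableOn_Ioi_of_intervalIntegral_norm_bounded c a hf tendsto_id
      ((eventually_ge_atTop a).mono fun b hb => (hnorm b).trans_le (h b hb))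
  exact le_of_tendsto (intervalIntegral_tendsto_integral_Ioi a hint tendsto_id)
    ((eventually_ge_atTop a).mono h)

theorem setIntegral_Ioi_le_of_hasDerivAt_le_neg {f G G' : ℝ → ℝ} {a : ℝ} (hf : Continuous f)
    (hf0 : ∀ t, 0 ≤ f t) (hG : ∀ t, HasDerivAt G (G' t) t) (hG' : ∀ t, G' t ≤ -f t)
    (hG0 : ∀ t, 0 ≤ G t) : ∫ t in Ioi a, f t ≤ G a := by
  refine setIntegral_Ioi_le_of_intervalIntegral_le (fun b => hf.integrableOn_Ioc) hf0
    fun b hab => ?_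
  have hGc : Continuous G := continuous_iff_continuousAt.2 fun t => (hG t).continuousAt
  have h := intervalIntegral.integral_le_sub_of_hasDeriv_right_of_le hab hGc.neg.continuousOn
    (fun t _ => (hG t).neg.hasDerivWithinAt) hf.integrableOn_Icc
    (fun t _ => le_neg_of_le_neg (hG' t))
  simp only [Pi.neg_apply] at h
  linarith [hG0 b]

section ClosedLoopCost

attribute [local instance] Matrix.linftyOpNormedAddCommGroup Matrix.linftyOpNormedRing
  Matrix.linftyOpNormedAlgebra

variable {ι κ ν : Type*} [Fintype ι] [DecidableEq ι] [Fintype κ] [Fintype ν]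

theorem hasDerivAt_transpose_mexp_mul_mul_mexp (A X : Matrix ι ι ℝ) (t : ℝ) :
    HasDerivAt (fun s : ℝ => (mexp (s • A))ᵀ * X * mexp (s • A))
      ((mexp (t • A))ᵀ * (Aᵀ * X + X * A) * mexp (t • A)) t := by
  have hT : ∀ s : ℝ, (mexp (s • A))ᵀ = mexp (s • Aᵀ) := fun s => by
    rw [mexp, mexp, ← transpose_smul, exp_transpose]
  simp only [hT]
  refine (((hasDerivAt_exp_smul_const Aᵀ t).mul_const X).mul
    (hasDerivAt_exp_smul_const' A t)).congr_deriv ?_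
  simp only [mexp, mul_add, add_mul, mul_assoc]
  -- the two sides differ only in the (defeq) ring structures on matrices
  rfl

theorem HasDerivAt.trace_transpose_mul_mul {N : ℝ → Matrix ι ι ℝ} {N' : Matrix ι ι ℝ} {t : ℝ}
    (E : Matrix ι κ ℝ) (h : HasDerivAt N N' t) :
    HasDerivAt (fun s => (Eᵀ * N s * E).trace) (Eᵀ * N' * E).trace t := by
  let L : Matrix ι ι ℝ →ₗ[ℝ] ℝ :=
    { toFun := fun N => (Eᵀ * N * E).trace
      map_add' := fun X Y => by rw [Matrix.mul_add, Matrix.add_mul, trace_add]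
      map_smul' := fun c N => by rw [Matrix.mul_smul, Matrix.smul_mul, trace_smul]; rfl }
  exact (LinearMap.toContinuousLinearMap L).hasFDerivAt.comp_hasDerivAt t h

theorem integral_trace_le_of_lyapunov {A P : Matrix ι ι ℝ} {W : Matrix κ ι ℝ}
    (E : Matrix ι ν ℝ) (hP : P.PosSemidef) (hL : (-(Aᵀ * P + P * A + Wᵀ * W)).PosSemidef) :
    ∫ t in Ioi (0:ℝ), ((W * mexp (t • A) * E)ᵀ * (W * mexp (t • A) * E)).trace
      ≤ (Eᵀ * P * E).trace := by
  set V : Matrix ι ι ℝ → ℝ → ℝ :=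
    fun X t => (Eᵀ * ((mexp (t • A))ᵀ * X * mexp (t • A)) * E).trace
  have hV_nonneg : ∀ X : Matrix ι ι ℝ, X.PosSemidef → ∀ t, 0 ≤ V X t := fun X hX t => by
    simpa [V, Matrix.mul_assoc] using
      (hX.conjTranspose_mul_mul_same (mexp (t • A) * E)).trace_nonneg
  have hV_deriv : ∀ X t, HasDerivAt (V X) (V (Aᵀ * X + X * A) t) t := fun X t =>
    (hasDerivAt_transpose_mexp_mul_mul_mexp A X t).trace_transpose_mul_mul E
  have hV_neg_add : ∀ X Y t, V (-(X + Y)) t = -V X t - V Y t := fun X Y t => by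
    simp only [V, neg_add, Matrix.mul_add, Matrix.add_mul, Matrix.mul_neg, Matrix.neg_mul,
      trace_add, trace_neg]
    ring
  have hV_zero : V P 0 = (Eᵀ * P * E).trace := by simp [V, mexp]
  have hintegrand : ∀ t, ((W * mexp (t • A) * E)ᵀ * (W * mexp (t • A) * E)).trace
      = V (Wᵀ * W) t := fun t => by simp only [V, transpose_mul, Matrix.mul_assoc]
  simp only [hintegrand, ← hV_zero]
  refine setIntegral_Ioi_le_of_hasDerivAt_le_neg
    (continuous_iff_continuousAt.2 fun t => (hV_deriv _ t).continuousAt)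
    (hV_nonneg _ (posSemidef_conjTranspose_mul_self W)) (hV_deriv P) (fun t => ?_)
    (hV_nonneg P hP)
  have hLt := hV_nonneg _ hL t
  rw [hV_neg_add] at hLt
  linarith

end ClosedLoopCost

theorem closedLoop_lyapunov_eq_riccati {ι κ μ : Type*} [Fintype ι] [Fintype κ] [Fintype μ]
    [DecidableEq μ] (A : Matrix ι ι ℝ) {P : Matrix ι ι ℝ} {B : Matrix ι μ ℝ}
    {C : Matrix κ ι ℝ} {D : Matrix κ μ ℝ} (hP : Pᵀ = P) (hDC : Dᵀ * C = 0) (hDD : Dᵀ * D = 1) :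
    (A + B * -(Bᵀ * P))ᵀ * P + P * (A + B * -(Bᵀ * P))
        + (C + D * -(Bᵀ * P))ᵀ * (C + D * -(Bᵀ * P))
      = Aᵀ * P + P * A - P * B * Bᵀ * P + Cᵀ * C := by
  have hCD : Cᵀ * D = 0 := by simpa using congrArg transpose hDC
  simp only [transpose_add, transpose_mul, transpose_neg, transpose_transpose, hP,
    Matrix.add_mul, Matrix.mul_add, Matrix.neg_mul, Matrix.mul_neg, Matrix.mul_assoc]
  simp only [← Matrix.mul_assoc Cᵀ D, ← Matrix.mul_assoc Dᵀ, hCD, hDC, hDD, Matrix.zero_mul,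
    Matrix.mul_zero, Matrix.one_mul]
  abel

theorem stmt6_general {n m p q : ℕ}
    (A : Matrix (Fin n) (Fin n) ℝ) (B : Matrix (Fin n) (Fin m) ℝ)
    (C : Matrix (Fin p) (Fin n) ℝ) (D : Matrix (Fin p) (Fin m) ℝ)
    (E : Matrix (Fin n) (Fin q) ℝ)
    (hDC : Dᵀ * C = 0) (hDD : Dᵀ * D = 1)
    (γ : ℝ)
    (P : Matrix (Fin n) (Fin n) ℝ) (hP : P.PosSemidef)
    (hRic : NegDef (Aᵀ * P + P * A - P * B * Bᵀ * P + Cᵀ * C))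
    (htr : (Eᵀ * P * E).trace < γ)
    (K : Matrix (Fin m) (Fin n) ℝ) (hK : K = -(Bᵀ * P)) :
    IsHurwitz (A + B * K) ∧
    (∫ t in Set.Ioi (0:ℝ),
        (((C + D * K) * mexp (t • (A + B * K)) * E)ᵀ
          * ((C + D * K) * mexp (t • (A + B * K)) * E)).trace) < γ := by
  subst hK
  have hPT : Pᵀ = P := hP.isHermitian
  rw [← closedLoop_lyapunov_eq_riccati A hPT hDC hDD] at hRic
  set W := C + D * -(Bᵀ * P)
  refine ⟨isHurwitz_of_lyapunov hP ?_,
    (integral_trace_le_of_lyapunov E hP hRic.posSemidef).trans_lt htr⟩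
  have hW : (Wᵀ * W).PosSemidef := posSemidef_conjTranspose_mul_self W
  have hLyap := hRic.add_posSemidef hW
  rwa [neg_add, neg_add_cancel_right] at hLyap

theorem stmt6 {n m p q : ℕ}
    (A : Matrix (Fin n) (Fin n) ℝ) (B : Matrix (Fin n) (Fin m) ℝ)
    (C : Matrix (Fin p) (Fin n) ℝ) (D : Matrix (Fin p) (Fin m) ℝ)
    (E : Matrix (Fin n) (Fin q) ℝ)
    (hstab : ∃ F : Matrix (Fin m) (Fin n) ℝ, IsHurwitz (A + B * F))
    (hDC : Dᵀ * C = 0) (hDD : Dᵀ * D = 1)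
    (γ : ℝ) (hγ : 0 < γ)
    (P : Matrix (Fin n) (Fin n) ℝ) (hP : P.PosSemidef)
    (hRic : NegDef (Aᵀ * P + P * A - P * B * Bᵀ * P + Cᵀ * C))
    (htr : (Eᵀ * P * E).trace < γ)
    (K : Matrix (Fin m) (Fin n) ℝ) (hK : K = -(Bᵀ * P)) :
    IsHurwitz (A + B * K) ∧
    (∫ t in Set.Ioi (0:ℝ),
        (((C + D * K) * mexp (t • (A + B * K)) * E)ᵀ
          * ((C + D * K) * mexp (t • (A + B * K)) * E)).trace) < γ :=
  stmt6_general A B C D E hDC hDD γ P hP hRic htr K hK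
end

section
/- Let A ∈ ℝ^{n×n}, B ∈ ℝ^{n×m} with (A,B) stabilizable, let α < 0 be a real number, and let Q ∈ ℝ^{n×n} be positive semidefinite. Then there exists a positive semidefinite matrix P ∈ ℝ^{n×n} satisfying the strict Riccati inequality AᵀP + PA + αPBBᵀP + Q < 0. -/
/-!
Choose `F` with `A_F := A + B F` Hurwitz. Then `exp (t A_F) → 0`, so for a large horizon `T` the
Gramian `P₀ = ∫₀ᵀ exp (t A_Fᵀ) exp (t A_F) dt` is positive semidefinite and satisfies
`A_Fᵀ P₀ + P₀ A_F = exp (T A_Fᵀ) exp (T A_F) - 1 ≤ -ε`. Completing the square,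
`Aᵀ P + P A + α P B Bᵀ P + Q = A_Fᵀ P + P A_F + (Q - α⁻¹ Fᵀ F) + α Gᵀ G` with `G = Bᵀ P - α⁻¹ F`,
and `α Gᵀ G ≤ 0`; for `P = c P₀` with `c` large the first term dominates the fixed matrix
`Q - α⁻¹ Fᵀ F`. The decay of `exp (t M)` for Hurwitz `M` is seen on each generalized eigenspace,
where `exp (t M) w` is `exp (μ t)` times a polynomial in `t`.
-/

open Matrix Filter

section Decay

attribute [local instance] Matrix.linftyOpNormedAddCommGroup Matrix.linftyOpNormedSpace
  Matrix.linftyOpNormedRing Matrix.linftyOpNormedAlgebra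

open Nat in
theorem Matrix.exp_mulVec_eq_sum_of_pow_mulVec_eq_zero {𝕂 ι : Type*} [RCLike 𝕂] [Fintype ι]
    [DecidableEq ι] {N : Matrix ι ι 𝕂} {w : ι → 𝕂} {K : ℕ} (hK : N ^ K *ᵥ w = 0) :
    NormedSpace.exp N *ᵥ w = ∑ k ∈ Finset.range K, (k !⁻¹ : 𝕂) • (N ^ k *ᵥ w) := by
  have hvanish (k : ℕ) (hk : k ∉ Finset.range K) : (k !⁻¹ : 𝕂) • (N ^ k *ᵥ w) = 0 := by
    rw [← Nat.sub_add_cancel (not_lt.mp (Finset.mem_range.not.mp hk)), pow_add, ← mulVec_mulVec,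
      hK, mulVec_zero, smul_zero]
  refine ((NormedSpace.exp_series_hasSum_exp' (𝕂 := 𝕂) N).map (mulVec.addMonoidHomLeft w)
    (by fun_prop : Continuous fun M : Matrix ι ι 𝕂 => M *ᵥ w)).unique ?_
  simpa [Function.comp_def, mulVec.addMonoidHomLeft, smul_mulVec] using
    (hasSum_sum_of_ne_finset_zero hvanish : HasSum _ _)

theorem tendsto_cexp_mul_mul_pow_atTop {μ : ℂ} (hμ : μ.re < 0) (k : ℕ) :
    Tendsto (fun t : ℝ => Complex.exp (t * μ) * (t : ℂ) ^ k) atTop (nhds 0) := by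
  rw [tendsto_zero_iff_norm_tendsto_zero]
  refine (tendsto_rpow_mul_exp_neg_mul_atTop_nhds_zero k (-μ.re) (neg_pos.mpr hμ)).congr' ?_
  filter_upwards [eventually_ge_atTop 0] with t ht
  simp [Complex.norm_exp, abs_of_nonneg ht, mul_comm]

open Nat in
theorem Matrix.tendsto_exp_smul_mulVec_of_pow_sub_mulVec_eq_zero {ι : Type*} [Fintype ι]
    [DecidableEq ι] {A : Matrix ι ι ℂ} {μ : ℂ} (hμ : μ.re < 0) {w : ι → ℂ} {K : ℕ}
    (hw : (A - μ • 1) ^ K *ᵥ w = 0) :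
    Tendsto (fun t : ℝ => NormedSpace.exp ((t : ℂ) • A) *ᵥ w) atTop (nhds 0) := by
  set N := A - μ • 1
  have hexp (t : ℝ) : NormedSpace.exp ((t : ℂ) • A) *ᵥ w
      = ∑ k ∈ Finset.range K, (Complex.exp (t * μ) * (t : ℂ) ^ k * (k !⁻¹ : ℂ)) • (N ^ k *ᵥ w) := by
    have hsplit : (t : ℂ) • A = algebraMap ℂ _ (t * μ) + (t : ℂ) • N := by
      rw [Algebra.algebraMap_eq_smul_one]; simp only [N]; module
    have htN : ((t : ℂ) • N) ^ K *ᵥ w = 0 := by rw [smul_pow, smul_mulVec, hw, smul_zero]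
    have hscalar : NormedSpace.exp (algebraMap ℂ (Matrix ι ι ℂ) (t * μ))
        = algebraMap ℂ _ (Complex.exp (t * μ)) := by
      rw [Complex.exp_eq_exp_ℂ]; exact (NormedSpace.algebraMap_exp_comm _).symm
    rw [hsplit, exp_add_of_commute _ _ (Algebra.commute_algebraMap_left _ _), hscalar,
      ← Algebra.smul_def, smul_mulVec, exp_mulVec_eq_sum_of_pow_mulVec_eq_zero htN, Finset.smul_sum]
    refine Finset.sum_congr rfl fun k _ => ?_
    rw [smul_pow, smul_mulVec, smul_smul, smul_smul]
    ring_nf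
  simp_rw [hexp]
  rw [← Finset.sum_const_zero (s := Finset.range K)]
  refine tendsto_finsetSum _ fun k _ => ?_
  simpa using ((tendsto_cexp_mul_mul_pow_atTop hμ k).mul_const (k !⁻¹ : ℂ)).smul_const (N ^ k *ᵥ w)

theorem Matrix.tendsto_exp_smul_mulVec_of_forall_re_neg {ι : Type*} [Fintype ι] [DecidableEq ι]
    {A : Matrix ι ι ℂ} (hA : ∀ μ ∈ spectrum ℂ A, μ.re < 0) (v : ι → ℂ) :
    Tendsto (fun t : ℝ => NormedSpace.exp ((t : ℂ) • A) *ᵥ v) atTop (nhds 0) := by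
  have hv : v ∈ ⨆ μ, Module.End.maxGenEigenspace (toLinAlgEquiv' A) μ := by
    rw [Module.End.iSup_maxGenEigenspace_eq_top]; trivial
  refine Submodule.iSup_induction _ (motive := fun w =>
    Tendsto (fun t : ℝ => NormedSpace.exp ((t : ℂ) • A) *ᵥ w) atTop (nhds 0)) hv ?_ (by simp) ?_
  · intro μ w hw
    obtain ⟨K, hK⟩ := (Module.End.mem_maxGenEigenspace _ μ w).mp hw
    replace hK : (A - μ • 1) ^ K *ᵥ w = 0 := by
      rwa [← toLinAlgEquiv'_apply, map_pow, map_sub, map_smul, map_one]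
    by_cases hμ : μ ∈ spectrum ℂ A
    · exact tendsto_exp_smul_mulVec_of_pow_sub_mulVec_eq_zero (hA μ hμ) hK
    · have hunit : IsUnit ((A - μ • 1) ^ K) := by
        refine IsUnit.pow K ?_
        rw [spectrum.mem_iff, not_not, Algebra.algebraMap_eq_smul_one, ← neg_sub, IsUnit.neg_iff] at hμ
        exact hμ
      obtain rfl : w = 0 := mulVec_injective_iff_isUnit.mpr hunit (by rw [hK, mulVec_zero])
      simp
  · intro x y hx hy
    simpa [mulVec_add] using hx.add hy

theorem Matrix.tendsto_exp_smul_of_forall_re_neg {ι : Type*} [Fintype ι] [DecidableEq ι]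
    {A : Matrix ι ι ℂ} (hA : ∀ μ ∈ spectrum ℂ A, μ.re < 0) :
    Tendsto (fun t : ℝ => NormedSpace.exp ((t : ℂ) • A)) atTop (nhds 0) := by
  refine tendsto_pi_nhds.mpr fun i => tendsto_pi_nhds.mpr fun j => ?_
  simpa [mulVec_single] using
    tendsto_pi_nhds.mp (tendsto_exp_smul_mulVec_of_forall_re_neg hA (Pi.single j 1)) i

theorem mexp_smul_map_algebraMap {ι : Type*} [Fintype ι] [DecidableEq ι] (A : Matrix ι ι ℝ)
    (t : ℝ) : (mexp (t • A)).map (algebraMap ℝ ℂ)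
      = NormedSpace.exp ((t : ℂ) • A.map (algebraMap ℝ ℂ)) := by
  let φ : Matrix ι ι ℝ →ₐ[ℝ] Matrix ι ι ℂ := (Algebra.ofId ℝ ℂ).mapMatrix
  have hφ (M : Matrix ι ι ℝ) : φ M = M.map (algebraMap ℝ ℂ) := rfl
  have hsmul : φ (t • A) = (t : ℂ) • A.map (algebraMap ℝ ℂ) := by
    ext i j; simp [hφ]
  rw [← hφ, ← hsmul, mexp]
  exact NormedSpace.map_exp φ φ.toLinearMap.continuous_of_finiteDimensional (t • A)

theorem tendsto_mexp_smul_of_isHurwitz {ι : Type*} [Fintype ι] [DecidableEq ι]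
    {A : Matrix ι ι ℝ} (hA : IsHurwitz A) : Tendsto (fun t : ℝ => mexp (t • A)) atTop (nhds 0) := by
  have hre : Continuous fun M : Matrix ι ι ℂ => M.map Complex.re := by fun_prop
  have hreal (t : ℝ) : mexp (t • A)
      = (NormedSpace.exp ((t : ℂ) • A.map (algebraMap ℝ ℂ))).map Complex.re := by
    rw [← mexp_smul_map_algebraMap, Matrix.map_map]
    simp [Function.comp_def]
  simp_rw [hreal]
  exact (Matrix.map_zero _ Complex.zero_re ▸ hre.tendsto 0).comp
    (tendsto_exp_smul_of_forall_re_neg hA)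

end Decay

section Gramian

attribute [local instance] Matrix.linftyOpNormedAddCommGroup Matrix.linftyOpNormedSpace
  Matrix.linftyOpNormedRing Matrix.linftyOpNormedAlgebra

variable {ι : Type*} [Fintype ι] [DecidableEq ι]

theorem mexp_smul_transpose (A : Matrix ι ι ℝ) (t : ℝ) : mexp (t • Aᵀ) = (mexp (t • A))ᵀ := by
  rw [← transpose_smul]; exact exp_transpose _

theorem hasDerivAt_mexp_smul (A : Matrix ι ι ℝ) (t : ℝ) :
    HasDerivAt (fun s : ℝ => mexp (s • A)) (mexp (t • A) * A) t :=
  hasDerivAt_exp_smul_const A t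

theorem hasDerivAt_mexp_smul' (A : Matrix ι ι ℝ) (t : ℝ) :
    HasDerivAt (fun s : ℝ => mexp (s • A)) (A * mexp (t • A)) t :=
  hasDerivAt_exp_smul_const' A t

theorem continuous_mexp_smul (A : Matrix ι ι ℝ) : Continuous fun s : ℝ => mexp (s • A) :=
  continuous_iff_continuousAt.2 fun t => (hasDerivAt_mexp_smul A t).continuousAt

noncomputable def gramian (A : Matrix ι ι ℝ) (T : ℝ) : Matrix ι ι ℝ :=
  ∫ t in (0 : ℝ)..T, mexp (t • Aᵀ) * mexp (t • A)

theorem continuous_gramian_integrand (A : Matrix ι ι ℝ) :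
    Continuous fun t : ℝ => mexp (t • Aᵀ) * mexp (t • A) :=
  (continuous_mexp_smul Aᵀ).mul (continuous_mexp_smul A)

theorem map_gramian {E : Type*} [NormedAddCommGroup E] [NormedSpace ℝ E] [CompleteSpace E]
    (L : Matrix ι ι ℝ →L[ℝ] E) (A : Matrix ι ι ℝ) (T : ℝ) :
    L (gramian A T) = ∫ t in (0 : ℝ)..T, L (mexp (t • Aᵀ) * mexp (t • A)) :=
  (L.intervalIntegral_comp_comm ((continuous_gramian_integrand A).intervalIntegrable 0 T)).symm

theorem transpose_mul_gramian_add_gramian_mul (A : Matrix ι ι ℝ) (T : ℝ) :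
    Aᵀ * gramian A T + gramian A T * A = mexp (T • Aᵀ) * mexp (T • A) - 1 := by
  set g : ℝ → Matrix ι ι ℝ := fun t => mexp (t • Aᵀ) * mexp (t • A)
  have hg : Continuous g := continuous_gramian_integrand A
  have hderiv (t : ℝ) : HasDerivAt g (Aᵀ * g t + g t * A) t := by
    have h := (hasDerivAt_mexp_smul' Aᵀ t).mul (hasDerivAt_mexp_smul A t)
    rwa [← mul_assoc, mul_assoc Aᵀ] at h
  have hleft : Continuous fun t => Aᵀ * g t := by fun_prop
  have hright : Continuous fun t => g t * A := by fun_prop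
  have hL : Aᵀ * gramian A T = ∫ t in (0 : ℝ)..T, Aᵀ * g t :=
    map_gramian (ContinuousLinearMap.mul ℝ _ Aᵀ) A T
  have hR : gramian A T * A = ∫ t in (0 : ℝ)..T, g t * A :=
    map_gramian ((ContinuousLinearMap.mul ℝ _).flip A) A T
  rw [hL, hR, ← intervalIntegral.integral_add (hleft.intervalIntegrable 0 T)
    (hright.intervalIntegrable 0 T), intervalIntegral.integral_eq_sub_of_hasDerivAt
    (fun t _ => hderiv t) ((hleft.add hright).intervalIntegrable 0 T)]
  simp [g, mexp]

theorem transpose_gramian (A : Matrix ι ι ℝ) (T : ℝ) : (gramian A T)ᵀ = gramian A T := by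
  have h : (gramian A T)ᵀ = ∫ t in (0 : ℝ)..T, (mexp (t • Aᵀ) * mexp (t • A))ᵀ :=
    map_gramian (transposeLinearEquiv ι ι ℝ ℝ).toLinearMap.toContinuousLinearMap A T
  simp_rw [h, transpose_mul, ← mexp_smul_transpose, transpose_transpose]
  rfl

theorem dotProduct_gramian_mulVec (A : Matrix ι ι ℝ) (T : ℝ) (x : ι → ℝ) :
    x ⬝ᵥ (gramian A T *ᵥ x) = ∫ t in (0 : ℝ)..T, (mexp (t • A) *ᵥ x) ⬝ᵥ (mexp (t • A) *ᵥ x) := by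
  have h := map_gramian (toLinearMap₂' ℝ |>.toLinearMap.flip x |>.flip x).toContinuousLinearMap A T
  simp only [LinearMap.coe_toContinuousLinearMap', LinearMap.flip_apply, LinearEquiv.coe_coe,
    toLinearMap₂'_apply'] at h
  rw [h]
  congr 1 with t
  rw [← mulVec_mulVec, dotProduct_mulVec, mexp_smul_transpose, vecMul_transpose]

theorem posSemidef_gramian (A : Matrix ι ι ℝ) {T : ℝ} (hT : 0 ≤ T) :
    (gramian A T).PosSemidef := by
  refine posSemidef_iff_dotProduct_mulVec.mpr ⟨?_, fun x => ?_⟩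
  · exact (conjTranspose_eq_transpose_of_trivial _).trans (transpose_gramian A T)
  · rw [star_trivial, dotProduct_gramian_mulVec]
    exact intervalIntegral.integral_nonneg hT fun t _ => dotProduct_self_star_nonneg _

end Gramian

theorem Matrix.dotProduct_mulVec_le_sum_abs_mul {ι : Type*} [Fintype ι] (M : Matrix ι ι ℝ)
    (x : ι → ℝ) : x ⬝ᵥ (M *ᵥ x) ≤ (∑ i, ∑ j, |M i j|) * (x ⬝ᵥ x) := by
  have hsq (i : ι) : x i ^ 2 ≤ x ⬝ᵥ x := by
    simpa [dotProduct, sq] using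
      Finset.single_le_sum (fun j _ => mul_self_nonneg (x j)) (Finset.mem_univ i)
  have hterm (i j : ι) : x i * (M i j * x j) ≤ |M i j| * (x ⬝ᵥ x) := by
    have hprod : x i * x j ≤ x ⬝ᵥ x := by nlinarith [two_mul_le_add_sq (x i) (x j), hsq i, hsq j]
    have hprod' : -(x i * x j) ≤ x ⬝ᵥ x := by
      nlinarith [two_mul_le_add_sq (x i) (-x j), hsq i, hsq j]
    rcases abs_cases (M i j) with ⟨h, hM⟩ | ⟨h, hM⟩ <;> rw [h] <;> nlinarith
  calc x ⬝ᵥ (M *ᵥ x) = ∑ i, ∑ j, x i * (M i j * x j) := by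
        simp only [dotProduct, mulVec, Finset.mul_sum]
    _ ≤ ∑ i, ∑ j, |M i j| * (x ⬝ᵥ x) :=
        Finset.sum_le_sum fun i _ => Finset.sum_le_sum fun j _ => hterm i j
    _ = (∑ i, ∑ j, |M i j|) * (x ⬝ᵥ x) := by simp only [Finset.sum_mul]

theorem exists_negDef_smul_add {ι : Type*} [Fintype ι] {L M : Matrix ι ι ℝ} (hL : L.IsHermitian)
    (hM : M.IsHermitian) {ε : ℝ} (hε : 0 < ε) (hLε : ∀ x, x ⬝ᵥ (L *ᵥ x) ≤ -ε * (x ⬝ᵥ x)) :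
    ∃ c : ℝ, 0 ≤ c ∧ NegDef (c • L + M) := by
  set K := ∑ i, ∑ j, |M i j|
  have hK : 0 ≤ K := by positivity
  refine ⟨(K + 1) / ε, by positivity, posDef_iff_dotProduct_mulVec.mpr ⟨?_, fun x hx => ?_⟩⟩
  · exact ((hL.smul (IsSelfAdjoint.all _)).add hM).neg
  have hxx : 0 < x ⬝ᵥ x := by
    simpa using dotProduct_star_self_pos_iff.mpr hx
  have hcL := mul_le_mul_of_nonneg_left (hLε x) (by positivity : 0 ≤ (K + 1) / ε)
  have hMx := M.dotProduct_mulVec_le_sum_abs_mul x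
  rw [star_trivial, neg_mulVec, dotProduct_neg, add_mulVec, smul_mulVec, dotProduct_add,
    dotProduct_smul, smul_eq_mul]
  have : (K + 1) / ε * (-ε * (x ⬝ᵥ x)) = -(K + 1) * (x ⬝ᵥ x) := by field_simp
  nlinarith

theorem IsHurwitz.exists_posSemidef_lyapunov_le {ι : Type*} [Fintype ι] [DecidableEq ι]
    {A : Matrix ι ι ℝ} (hA : IsHurwitz A) :
    ∃ P : Matrix ι ι ℝ, P.PosSemidef ∧
      ∃ ε > 0, ∀ x, x ⬝ᵥ ((Aᵀ * P + P * A) *ᵥ x) ≤ -ε * (x ⬝ᵥ x) := by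
  have hdecay := tendsto_mexp_smul_of_isHurwitz hA
  have hE : Tendsto (fun t : ℝ => mexp (t • Aᵀ) * mexp (t • A)) atTop (nhds 0) := by
    simp_rw [mexp_smul_transpose]
    simpa using (((continuous_id.matrix_transpose).tendsto 0).comp hdecay).mul hdecay
  have hK :=
    ((by fun_prop : Continuous fun M : Matrix ι ι ℝ => ∑ i, ∑ j, |M i j|).tendsto 0).comp hE
  simp only [Matrix.zero_apply, abs_zero, Finset.sum_const_zero] at hK
  obtain ⟨T, hT, hKT⟩ := ((eventually_ge_atTop 0).and (hK.eventually_lt_const one_pos)).exists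
  rw [Function.comp_apply] at hKT
  refine ⟨gramian A T, posSemidef_gramian A hT, _, sub_pos.mpr hKT, fun x => ?_⟩
  rw [transpose_mul_gramian_add_gramian_mul, sub_mulVec, one_mulVec, dotProduct_sub]
  linarith [dotProduct_mulVec_le_sum_abs_mul (mexp (T • Aᵀ) * mexp (T • A)) x]

theorem Matrix.IsHermitian.transpose_mul_add_mul {ι : Type*} [Fintype ι] {P : Matrix ι ι ℝ}
    (hP : P.IsHermitian) (X : Matrix ι ι ℝ) : (Xᵀ * P + P * X).IsHermitian := by
  rw [IsHermitian, conjTranspose_eq_transpose_of_trivial] at hP ⊢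
  rw [transpose_add, transpose_mul, transpose_mul, hP, transpose_transpose, add_comm]

theorem riccati_eq_completeSquare {ι κ : Type*} [Fintype ι] [Fintype κ] (A : Matrix ι ι ℝ)
    (B : Matrix ι κ ℝ) (F : Matrix κ ι ℝ) {P : Matrix ι ι ℝ} (hP : Pᵀ = P) (Q : Matrix ι ι ℝ)
    {α : ℝ} (hα : α ≠ 0) :
    Aᵀ * P + P * A + α • (P * B * Bᵀ * P) + Q
      = ((A + B * F)ᵀ * P + P * (A + B * F)) + (Q - α⁻¹ • (Fᵀ * F))
        + α • ((Bᵀ * P - α⁻¹ • F)ᵀ * (Bᵀ * P - α⁻¹ • F)) := by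
  simp only [transpose_add, transpose_sub, transpose_mul, transpose_smul, transpose_transpose, hP,
    Matrix.add_mul, Matrix.mul_add, Matrix.sub_mul, Matrix.mul_sub, Matrix.smul_mul,
    Matrix.mul_smul, smul_sub, smul_smul, mul_inv_cancel₀ hα, mul_inv_cancel_left₀ hα, Matrix.mul_assoc, one_smul]
  abel

theorem NegDef.add_smul_transpose_mul_self {ι κ : Type*} [Fintype ι] [Fintype κ]
    {X : Matrix ι ι ℝ} (hX : NegDef X) {α : ℝ} (hα : α ≤ 0) (G : Matrix κ ι ℝ) :
    NegDef (X + α • (Gᵀ * G)) := by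
  rw [NegDef, neg_add, ← neg_smul]
  exact hX.add_posSemidef ((posSemidef_conjTranspose_mul_self G).smul (neg_nonneg.mpr hα))

theorem stmt15 {n m : ℕ}
    (A : Matrix (Fin n) (Fin n) ℝ) (B : Matrix (Fin n) (Fin m) ℝ)
    (hstab : ∃ F : Matrix (Fin m) (Fin n) ℝ, IsHurwitz (A + B * F))
    (α : ℝ) (hα : α < 0)
    (Q : Matrix (Fin n) (Fin n) ℝ) (hQ : Q.PosSemidef) :
    ∃ P : Matrix (Fin n) (Fin n) ℝ, P.PosSemidef ∧
      NegDef (Aᵀ * P + P * A + α • (P * B * Bᵀ * P) + Q) := by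
  obtain ⟨F, hF⟩ := hstab
  obtain ⟨P₀, hP₀, ε, hε, hlyap⟩ := hF.exists_posSemidef_lyapunov_le
  have hM : (Q - α⁻¹ • (Fᵀ * F)).IsHermitian :=
    hQ.1.sub ((isHermitian_conjTranspose_mul_self F).smul (IsSelfAdjoint.all _))
  obtain ⟨c, hc, hneg⟩ := exists_negDef_smul_add (hP₀.1.transpose_mul_add_mul _) hM hε hlyap
  have hP : (c • P₀)ᵀ = c • P₀ := by
    rw [transpose_smul, ← conjTranspose_eq_transpose_of_trivial, hP₀.1]
  refine ⟨c • P₀, hP₀.smul hc, ?_⟩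
  rw [riccati_eq_completeSquare A B F hP Q hα.ne]
  simpa only [smul_add, Matrix.mul_smul, Matrix.smul_mul] using
    hneg.add_smul_transpose_mul_self hα.le (Bᵀ * (c • P₀) - α⁻¹ • F)
end
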